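/- In a two-type instance with houses sorted in descending order of v_L(h) − v_S(h), if (v_L(h_{n_L}) − v_S(h_{n_L}))/w_L < (v_L(h_{m−n_S+1}) − v_S(h_{m−n_S+1}))/w_S, then no allocation is weighted envy-freeable: in every allocation there exist a large agent i with v_L(A_i) − v_S(A_i) ≤ v_L(h_{n_L}) − v_S(h_{n_L}) and a small agent j with v_L(A_j) − v_S(A_j) ≥ v_L(h_{m−n_S+1}) − v_S(h_{m−n_S+1}), and the two-cycle between them has positive weight. -/
import Mathlib


/-- Two-type instances: with houses sorted in descending order of v_L − v_S, if
(v_L(h_{n_L}) − v_S(h_{n_L}))/w_L < (v_L(h_{m−n_S+1}) − v_S(h_{m−n_S+1}))/w_S,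
then no allocation is weighted envy-freeable: every allocation contains a large
agent and a small agent whose two-cycle has positive weight. -/
theorem stmt14 {ι : Type*} [Fintype ι] (m nL nS : ℕ)
    (hm : nL + nS ≤ m) (hnL : 0 < nL) (hnS : 0 < nS)
    (t : ι → Bool)
    (hcardL : Fintype.card {i // t i = true} = nL)
    (hcardS : Fintype.card {i // t i = false} = nS)
    (wL wS : ℝ) (hwL : 0 < wL) (hwS : 0 < wS)
    (vL vS : Fin m → ℝ)
    (hsorted : ∀ k k' : Fin m, k ≤ k' → vL k' - vS k' ≤ vL k - vS k)
    (hcond : (vL ⟨nL - 1, by omega⟩ - vS ⟨nL - 1, by omega⟩) / wL <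
             (vL ⟨m - nS, by omega⟩ - vS ⟨m - nS, by omega⟩) / wS)
    (A : ι → Fin m) (hA : Function.Injective A) :
    (¬ ∃ p : ι → ℝ, (∀ i, 0 ≤ p i) ∧
      ∀ i j : ι,
        ((if t i then vL else vS) (A j) + p j) / (if t j then wL else wS) ≤
        ((if t i then vL else vS) (A i) + p i) / (if t i then wL else wS)) ∧
    ∃ i j : ι, t i = true ∧ t j = false ∧
      (vL (A i) - vS (A i) ≤ vL ⟨nL - 1, by omega⟩ - vS ⟨nL - 1, by omega⟩) ∧
      (vL ⟨m - nS, by omega⟩ - vS ⟨m - nS, by omega⟩ ≤ vL (A j) - vS (A j)) ∧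
      0 < (vL (A j) / wS - vL (A i) / wL) + (vS (A i) / wL - vS (A j) / wS) := by
  classical
  have hAval : Function.Injective (fun i => (A i).val) := fun a b hab =>
    hA (Fin.val_injective hab)
  set SL := Finset.univ.filter (fun i => t i = true) with hSL
  set SS := Finset.univ.filter (fun i => t i = false) with hSS
  have hcardL' : SL.card = nL := by
    rw [← hcardL, Fintype.card_subtype]
  have hcardS' : SS.card = nS := by
    rw [← hcardS, Fintype.card_subtype]
  obtain ⟨i, hiL, hi⟩ : ∃ i ∈ SL, nL - 1 ≤ (A i).val := by
    by_contra h
    push_neg at h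
    have hsub : (SL.image (fun i => (A i).val)) ⊆ Finset.range (nL - 1) := by
      intro x hx
      rw [Finset.mem_image] at hx
      obtain ⟨a, ha, rfl⟩ := hx
      exact Finset.mem_range.mpr (h a ha)
    have hc := Finset.card_le_card hsub
    rw [Finset.card_image_of_injective _ hAval, hcardL', Finset.card_range] at hc
    omega
  obtain ⟨j, hjS, hj⟩ : ∃ j ∈ SS, (A j).val ≤ m - nS := by
    by_contra h
    push_neg at h
    have hsub : (SS.image (fun i => (A i).val)) ⊆ Finset.Ico (m - nS + 1) m := by
      intro x hx
      rw [Finset.mem_image] at hx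
      obtain ⟨a, ha, rfl⟩ := hx
      exact Finset.mem_Ico.mpr ⟨h a ha, (A a).isLt⟩
    have hc := Finset.card_le_card hsub
    rw [Finset.card_image_of_injective _ hAval, hcardS', Nat.card_Ico] at hc
    omega
  have hti : t i = true := by
    have := Finset.mem_filter.mp hiL; exact this.2
  have htj : t j = false := by
    have := Finset.mem_filter.mp hjS; exact this.2
  have hi' : vL (A i) - vS (A i) ≤ vL ⟨nL - 1, by omega⟩ - vS ⟨nL - 1, by omega⟩ :=
    hsorted ⟨nL - 1, by omega⟩ (A i) hi
  have hj' : vL ⟨m - nS, by omega⟩ - vS ⟨m - nS, by omega⟩ ≤ vL (A j) - vS (A j) :=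
    hsorted (A j) ⟨m - nS, by omega⟩ hj
  have h1 : (vL (A i) - vS (A i)) / wL ≤
      (vL ⟨nL - 1, by omega⟩ - vS ⟨nL - 1, by omega⟩ : ℝ) / wL :=
    (div_le_div_iff_of_pos_right hwL).mpr hi'
  have h2 : (vL ⟨m - nS, by omega⟩ - vS ⟨m - nS, by omega⟩ : ℝ) / wS ≤
      (vL (A j) - vS (A j)) / wS :=
    (div_le_div_iff_of_pos_right hwS).mpr hj'
  have e1 : (vL (A i) - vS (A i)) / wL = vL (A i) / wL - vS (A i) / wL := sub_div _ _ _
  have e2 : (vL (A j) - vS (A j)) / wS = vL (A j) / wS - vS (A j) / wS := sub_div _ _ _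
  have hpos : 0 < (vL (A j) / wS - vL (A i) / wL) + (vS (A i) / wL - vS (A j) / wS) := by
    rw [e1] at h1
    rw [e2] at h2
    linarith
  refine ⟨?_, i, j, hti, htj, hi', hj', hpos⟩
  rintro ⟨p, hp, hEF⟩
  have g1 := hEF i j
  have g2 := hEF j i
  rw [hti, htj] at g1 g2
  simp only [Bool.false_eq_true, if_true, if_false] at g1 g2
  rw [add_div, add_div] at g1 g2
  linarith
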